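/- arXiv:1801.09269 — 5 statements merged into one kernel-verified Lean document; each statement's English description precedes it below -/
import Mathlib

section
/- Let A be a real symmetric positive definite n×n matrix and B a real symmetric positive semidefinite n×n matrix. Then T = A^{-1/2}(A^{1/2} B A^{1/2})^{1/2} A^{-1/2} is the unique symmetric positive semidefinite solution of the Riccati equation T A T = B. -/
open Matrix

namespace Matrix.PosSemidef

section

open scoped ComplexOrder

/-- The positive semidefinite square root of a positive semidefinite matrix, as defined in the
older Mathlib (`Matrix.PosSemidef.sqrt`, since removed). -/
noncomputable def sqrt {n : Type*} [Fintype n] [DecidableEq n] {𝕜 : Type*} [RCLike 𝕜]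
    {A : Matrix n n 𝕜} (hA : PosSemidef A) : Matrix n n 𝕜 :=
  hA.1.eigenvectorUnitary.1 * diagonal ((↑) ∘ (√·) ∘ hA.1.eigenvalues) *
  (star hA.1.eigenvectorUnitary : Matrix n n 𝕜)

lemma posSemidef_sqrt {n : Type*} [Fintype n] [DecidableEq n] {𝕜 : Type*} [RCLike 𝕜]
    {A : Matrix n n 𝕜} (hA : PosSemidef A) : PosSemidef hA.sqrt := by
  have hD : (diagonal ((↑) ∘ (√·) ∘ hA.1.eigenvalues : n → 𝕜)).PosSemidef := by
    rw [posSemidef_diagonal_iff]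
    intro i
    simp only [Function.comp_apply, RCLike.ofReal_nonneg]
    exact Real.sqrt_nonneg _
  exact hD.mul_mul_conjTranspose_same _

end

end Matrix.PosSemidef

/-- The matrix `A^{1/2} B A^{1/2}` is positive semidefinite. -/
lemma sandwich_psd {n : ℕ} {A B : Matrix (Fin n) (Fin n) ℝ} (hA : A.PosDef) (hB : B.PosSemidef) :
    (hA.posSemidef.sqrt * B * hA.posSemidef.sqrt).PosSemidef := by
  have h := hB.conjTranspose_mul_mul_same hA.posSemidef.sqrt
  rwa [hA.posSemidef.posSemidef_sqrt.isHermitian.eq] at h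

/-!
Write `S = A^{1/2}`, which is invertible. The congruence `T ↦ S T S` preserves positive
semidefiniteness in both directions and, since `A = S S`, turns `T A T = B` into
`(S T S)² = S B S`.
So positive semidefinite solutions `T` correspond to positive semidefinite square roots of
`S B S`, of which there is exactly one.
-/

namespace Matrix.PosSemidef

lemma mul_mul_of_isHermitian {n R : Type*} [Fintype n] [CommRing R] [PartialOrder R] [StarRing R]
    {X S : Matrix n n R} (hX : X.PosSemidef) (hS : S.IsHermitian) : (S * X * S).PosSemidef := by
  simpa only [hS.eq] using hX.conjTranspose_mul_mul_same S

section sqrt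

open scoped MatrixOrder ComplexOrder

variable {n : Type*} [Fintype n] [DecidableEq n] {𝕜 : Type*} [RCLike 𝕜] {A : Matrix n n 𝕜}

lemma sqrt_eq_cfcSqrt (hA : A.PosSemidef) : hA.sqrt = CFC.sqrt A := by
  rw [CFC.sqrt_eq_real_sqrt A hA.nonneg, cfcₙ_eq_cfc, hA.1.cfc_eq]
  rfl

lemma sqrt_mul_self (hA : A.PosSemidef) : hA.sqrt * hA.sqrt = A := by
  rw [sqrt_eq_cfcSqrt]
  exact CFC.sqrt_mul_sqrt_self A hA.nonneg

lemma eq_sqrt_of_mul_self_eq {X : Matrix n n 𝕜} (hX : X.PosSemidef) (hA : A.PosSemidef)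
    (h : X * X = A) : X = hA.sqrt := by
  rw [sqrt_eq_cfcSqrt]
  exact (CFC.sqrt_unique h hX.nonneg).symm

end sqrt

end Matrix.PosSemidef

open scoped ComplexOrder in
lemma Matrix.PosDef.isUnit_sqrt {n : Type*} [Fintype n] [DecidableEq n] {𝕜 : Type*} [RCLike 𝕜]
    {A : Matrix n n 𝕜} (hA : A.PosDef) : IsUnit hA.posSemidef.sqrt :=
  isUnit_of_mul_isUnit_left (hA.posSemidef.sqrt_mul_self ▸ hA.isUnit)

/-- `T = A^{-1/2}(A^{1/2} B A^{1/2})^{1/2} A^{-1/2}` is the unique symmetric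
positive semidefinite solution of the Riccati equation `T A T = B`. -/
theorem riccati_solution_unique {n : ℕ} {A B : Matrix (Fin n) (Fin n) ℝ}
    (hA : A.PosDef) (hB : B.PosSemidef) :
    ((hA.posSemidef.sqrt)⁻¹ * (sandwich_psd hA hB).sqrt * (hA.posSemidef.sqrt)⁻¹).PosSemidef ∧
    ((hA.posSemidef.sqrt)⁻¹ * (sandwich_psd hA hB).sqrt * (hA.posSemidef.sqrt)⁻¹) * A *
      ((hA.posSemidef.sqrt)⁻¹ * (sandwich_psd hA hB).sqrt * (hA.posSemidef.sqrt)⁻¹) = B ∧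
    ∀ T : Matrix (Fin n) (Fin n) ℝ, T.PosSemidef → T * A * T = B →
      T = (hA.posSemidef.sqrt)⁻¹ * (sandwich_psd hA hB).sqrt * (hA.posSemidef.sqrt)⁻¹ := by
  set S := hA.posSemidef.sqrt
  set C := (sandwich_psd hA hB).sqrt
  have hS : IsUnit S := hA.isUnit_sqrt
  have hSdet : IsUnit S.det := (isUnit_iff_isUnit_det S).mp hS
  have hS_herm : S.IsHermitian := hA.posSemidef.posSemidef_sqrt.isHermitian
  have hSS : S * S = A := hA.posSemidef.sqrt_mul_self
  have hCC : C * C = S * B * S := (sandwich_psd hA hB).sqrt_mul_self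
  have hsquare (T : Matrix (Fin n) (Fin n) ℝ) : S * T * S * (S * T * S) = S * (T * A * T) * S := by
    simp only [← hSS, Matrix.mul_assoc]
  have hcancel {X Y : Matrix (Fin n) (Fin n) ℝ} (h : S * X * S = S * Y * S) : X = Y :=
    hS.mul_left_cancel (hS.mul_right_cancel h)
  have hconj : S * (S⁻¹ * C * S⁻¹) * S = C := by
    rw [← Matrix.mul_assoc, mul_nonsing_inv_cancel_left _ _ hSdet,
      nonsing_inv_mul_cancel_right _ _ hSdet]
  refine ⟨(sandwich_psd hA hB).posSemidef_sqrt.mul_mul_of_isHermitian hS_herm.inv,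
    hcancel ?_, fun T hT hTAT => hcancel ?_⟩
  · rw [← hsquare, hconj, hCC]
  · have hsq : S * T * S * (S * T * S) = S * B * S := by rw [hsquare, hTAT]
    rw [hconj]
    exact (hT.mul_mul_of_isHermitian hS_herm).eq_sqrt_of_mul_self_eq _ hsq
end

section
/- For any invertible n×n real matrix A, the space M(n) of all n×n real matrices decomposes as the direct orthogonal sum M(n) = Sym(n)·A ⊕ Skew(n)·(A^*)^{-1}, with respect to the Frobenius inner product ⟨X,Y⟩ = Tr(X Y^*). -/
open Matrix

private lemma frob_zero {n : ℕ} (E : Matrix (Fin n) (Fin n) ℝ)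
    (h : (E * Eᵀ).trace = 0) : E = 0 := by
  have hsum : ∑ i, ∑ j, (E i j) ^ 2 = 0 := by
    simpa [Matrix.trace, Matrix.mul_apply, Matrix.diag, sq] using h
  ext i j
  have h1 := (Finset.sum_eq_zero_iff_of_nonneg
    (fun i _ => Finset.sum_nonneg fun j _ => sq_nonneg (E i j))).mp hsum i (Finset.mem_univ i)
  have h2 := (Finset.sum_eq_zero_iff_of_nonneg
    (fun j _ => sq_nonneg (E i j))).mp h1 j (Finset.mem_univ j)
  simpa using sq_eq_zero_iff.mp h2

private lemma orth_aux {n : ℕ} {A : Matrix (Fin n) (Fin n) ℝ} (hA : IsUnit A)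
    (S D : Matrix (Fin n) (Fin n) ℝ) (hS : S.IsSymm) (hD : Dᵀ = -D) :
    ((S * A) * (D * (Aᵀ)⁻¹)ᵀ).trace = 0 := by
  have hdet : IsUnit A.det := (Matrix.isUnit_iff_isUnit_det A).mp hA
  have htrans : ((Aᵀ)⁻¹)ᵀ = A⁻¹ := by
    rw [← Matrix.transpose_nonsing_inv, Matrix.transpose_transpose]
  have key : (S * A) * (D * (Aᵀ)⁻¹)ᵀ = S * Dᵀ := by
    rw [Matrix.transpose_mul, htrans, ← Matrix.mul_assoc, Matrix.mul_assoc S A A⁻¹,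
      Matrix.mul_nonsing_inv A hdet, Matrix.mul_one]
  have hSD : (S * D).trace = 0 := by
    have h1 : (S * D).trace = ((S * D)ᵀ).trace := (Matrix.trace_transpose _).symm
    rw [Matrix.transpose_mul, hD, hS, Matrix.neg_mul, Matrix.trace_neg,
      Matrix.trace_mul_comm D S] at h1
    linarith
  rw [key, hD, Matrix.mul_neg, Matrix.trace_neg, hSD, neg_zero]

private lemma cancel_aux {n : ℕ} {A : Matrix (Fin n) (Fin n) ℝ} (hA : IsUnit A)
    (S D : Matrix (Fin n) (Fin n) ℝ) (hS : S.IsSymm) (hD : Dᵀ = -D)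
    (h : S * A + D * (Aᵀ)⁻¹ = 0) : S = 0 ∧ D = 0 := by
  have hdet : IsUnit A.det := (Matrix.isUnit_iff_isUnit_det A).mp hA
  have hdetT : IsUnit Aᵀ.det := by rwa [Matrix.det_transpose]
  have hE : S * A = -(D * (Aᵀ)⁻¹) := eq_neg_of_add_eq_zero_left h
  have hEt : (S * A)ᵀ = -((D * (Aᵀ)⁻¹)ᵀ) := by rw [hE, Matrix.transpose_neg]
  have hzero : ((S * A) * (S * A)ᵀ).trace = 0 := by
    rw [hEt, Matrix.mul_neg, Matrix.trace_neg, orth_aux hA S D hS hD, neg_zero]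
  have hSA : S * A = 0 := frob_zero _ hzero
  have hS0 : S = 0 := by
    have := congrArg (· * A⁻¹) hSA
    simpa [Matrix.mul_assoc, Matrix.mul_nonsing_inv A hdet] using this
  have hDA : D * (Aᵀ)⁻¹ = 0 := by
    rw [hSA, zero_add] at h; exact h
  have hD0 : D = 0 := by
    have := congrArg (· * Aᵀ) hDA
    simpa [Matrix.mul_assoc, Matrix.nonsing_inv_mul Aᵀ hdetT] using this
  exact ⟨hS0, hD0⟩

/-- `M(n) = Sym(n)·A ⊕ Skew(n)·(Aᵀ)⁻¹`, an orthogonal direct sum with respect to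
the Frobenius inner product `⟨X,Y⟩ = Tr(X Yᵀ)`. -/
theorem sym_skew_orthogonal_decomposition {n : ℕ} {A : Matrix (Fin n) (Fin n) ℝ}
    (hA : IsUnit A) :
    (∀ X : Matrix (Fin n) (Fin n) ℝ,
      ∃! p : Matrix (Fin n) (Fin n) ℝ × Matrix (Fin n) (Fin n) ℝ,
        p.1.IsSymm ∧ p.2ᵀ = -p.2 ∧ X = p.1 * A + p.2 * (Aᵀ)⁻¹) ∧
    (∀ S D : Matrix (Fin n) (Fin n) ℝ, S.IsSymm → Dᵀ = -D →
      ((S * A) * (D * (Aᵀ)⁻¹)ᵀ).trace = 0) := by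
  refine ⟨?_, fun S D hS hD => orth_aux hA S D hS hD⟩
  let T : Matrix (Fin n) (Fin n) ℝ →ₗ[ℝ] Matrix (Fin n) (Fin n) ℝ :=
    { toFun := fun Y => (((1:ℝ)/2) • (Y + Yᵀ)) * A + (((1:ℝ)/2) • (Y - Yᵀ)) * (Aᵀ)⁻¹
      map_add' := by
        intro Y Z
        simp only [Matrix.transpose_add, Matrix.smul_mul, Matrix.add_mul, Matrix.sub_mul,
          smul_add, smul_sub]
        abel
      map_smul' := by
        intro c Y
        simp only [Matrix.transpose_smul, Matrix.smul_mul, Matrix.add_mul, Matrix.sub_mul,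
          RingHom.id_apply]
        module }
  have hTinj : Function.Injective T := by
    rw [← LinearMap.ker_eq_bot, LinearMap.ker_eq_bot']
    intro Y hY
    have hS : (((1:ℝ)/2) • (Y + Yᵀ)).IsSymm := by
      unfold Matrix.IsSymm
      rw [Matrix.transpose_smul, Matrix.transpose_add, Matrix.transpose_transpose, add_comm]
    have hD : (((1:ℝ)/2) • (Y - Yᵀ))ᵀ = -(((1:ℝ)/2) • (Y - Yᵀ)) := by
      rw [Matrix.transpose_smul, Matrix.transpose_sub, Matrix.transpose_transpose, ← smul_neg,
        neg_sub]
    obtain ⟨h1, h2⟩ := cancel_aux hA _ _ hS hD hY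
    have : Y = ((1:ℝ)/2) • (Y + Yᵀ) + ((1:ℝ)/2) • (Y - Yᵀ) := by module
    rw [this, h1, h2, add_zero]
  have hTsurj : Function.Surjective T := (LinearMap.injective_iff_surjective).mp hTinj
  intro X
  obtain ⟨Y, hY⟩ := hTsurj X
  refine ⟨(((1:ℝ)/2) • (Y + Yᵀ), ((1:ℝ)/2) • (Y - Yᵀ)), ⟨?_, ?_, ?_⟩, ?_⟩
  · unfold Matrix.IsSymm
    rw [Matrix.transpose_smul, Matrix.transpose_add, Matrix.transpose_transpose, add_comm]
  · rw [Matrix.transpose_smul, Matrix.transpose_sub, Matrix.transpose_transpose, ← smul_neg,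
      neg_sub]
  · exact hY.symm
  · rintro ⟨S, D⟩ ⟨hS, hD, hX⟩
    dsimp only at hS hD hX
    have hS' : (S - ((1:ℝ)/2) • (Y + Yᵀ)).IsSymm := by
      unfold Matrix.IsSymm at hS ⊢
      rw [Matrix.transpose_sub, hS, Matrix.transpose_smul, Matrix.transpose_add,
        Matrix.transpose_transpose, add_comm]
    have hD' : (D - ((1:ℝ)/2) • (Y - Yᵀ))ᵀ = -(D - ((1:ℝ)/2) • (Y - Yᵀ)) := by
      rw [Matrix.transpose_sub, hD, Matrix.transpose_smul, Matrix.transpose_sub,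
        Matrix.transpose_transpose]
      module
    have hzero : (S - ((1:ℝ)/2) • (Y + Yᵀ)) * A
        + (D - ((1:ℝ)/2) • (Y - Yᵀ)) * (Aᵀ)⁻¹ = 0 := by
      have hY' : X = (((1:ℝ)/2) • (Y + Yᵀ)) * A + (((1:ℝ)/2) • (Y - Yᵀ)) * (Aᵀ)⁻¹ := hY.symm
      rw [hX] at hY'
      rw [Matrix.sub_mul, Matrix.sub_mul, sub_add_sub_comm, ← hY', sub_self]
    obtain ⟨h1, h2⟩ := cancel_aux hA _ _ hS' hD' hzero
    have e1 : S = ((1:ℝ)/2) • (Y + Yᵀ) := by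
      have := sub_eq_zero.mp h1; exact this
    have e2 : D = ((1:ℝ)/2) • (Y - Yᵀ) := sub_eq_zero.mp h2
    exact Prod.ext e1 e2
end

section
/- Let A be an invertible n×n real matrix and X any n×n real matrix. The orthogonal projection (with respect to the Frobenius inner product) of X onto the subspace Sym(n)·A equals L_{AA^*}[X A^* + A X^*] · A, where L_C is the Lyapunov solution operator for the symmetric positive definite matrix C = AA^*. -/
open Matrix

/-- the Frobenius-orthogonal projection of `X` onto `Sym(n)·A` is
`L_{AAᵀ}[X Aᵀ + A Xᵀ] · A`: it lies in `Sym(n)·A` and `X` minus it is orthogonal to `Sym(n)·A`. -/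
theorem horizontal_projection {n : ℕ} {A X Y : Matrix (Fin n) (Fin n) ℝ}
    (hA : IsUnit A) (hY : Y.IsSymm)
    (hYeq : Y * (A * Aᵀ) + (A * Aᵀ) * Y = X * Aᵀ + A * Xᵀ) :
    (∃ S : Matrix (Fin n) (Fin n) ℝ, S.IsSymm ∧ Y * A = S * A) ∧
    (∀ S : Matrix (Fin n) (Fin n) ℝ, S.IsSymm → ((X - Y * A) * (S * A)ᵀ).trace = 0) := by
  refine ⟨⟨Y, hY, rfl⟩, fun S hS => ?_⟩
  set M := X * Aᵀ - Y * (A * Aᵀ) with hM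
  have hC : (A * Aᵀ)ᵀ = A * Aᵀ := by rw [transpose_mul, transpose_transpose]
  have key : M + Mᵀ = 0 := by
    rw [hM, transpose_sub, transpose_mul, transpose_mul, transpose_transpose, hC, hY.eq]
    linear_combination (norm := abel) - hYeq
  have h2 : (M * S).trace = (Mᵀ * S).trace := by
    conv_lhs => rw [← trace_transpose, transpose_mul, hS.eq, trace_mul_comm]
  have h3 : (M * S).trace + (Mᵀ * S).trace = 0 := by
    rw [← trace_add, ← add_mul, key, zero_mul, trace_zero]
  have hgoal : ((X - Y * A) * (S * A)ᵀ).trace = (M * S).trace := by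
    rw [transpose_mul, hS.eq, hM]
    rw [show (X - Y * A) * (Aᵀ * S) = (X * Aᵀ - Y * (A * Aᵀ)) * S by noncomm_ring]
  rw [hgoal]; linarith
end

section
/- Let A₀, A₁ be invertible n×n real matrices and suppose the line A(θ) = (1−θ)A₀ + θA₁ consists of invertible matrices for θ in an open interval containing [0,1] and is horizontal, i.e. A₁^* A₀ = A₀^* A₁. Then T := A₁ A₀^{-1} is symmetric positive definite and satisfies T (A₀A₀^*) T = A₁A₁^*. -/
/-!
Horizontality says exactly that `T = A₁ A₀⁻¹` is symmetric, and then
`T (A₀ A₀ᵀ) T = (T A₀)(T A₀)ᵀ = A₁ A₁ᵀ`. Since `(1 - θ) A₀ + θ A₁ = ((1 - θ) + θ T) A₀`,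
invertibility along the segment `θ ∈ (0, 1]` keeps every `μ ≤ 0` out of the spectrum of `T`
(take `θ = 1 / (1 - μ)`), so the symmetric matrix `T` has positive eigenvalues.
-/

open Matrix

theorem spectrum.pos_of_forall_isUnit_segment {A : Type*} [Ring A] [Algebra ℝ A] {t : A}
    (hseg : ∀ θ ∈ Set.Ioc (0 : ℝ) 1, IsUnit ((1 - θ) • (1 : A) + θ • t))
    {μ : ℝ} (hμ : μ ∈ spectrum ℝ t) : 0 < μ := by
  by_contra! hμ_nonpos
  set θ : ℝ := (1 - μ)⁻¹ with hθ
  have hθ_pos : 0 < θ := inv_pos.mpr (by linarith)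
  have hθ_le_one : θ ≤ 1 := inv_le_one_of_one_le₀ (by linarith)
  have hμ_eq : μ = 1 - θ⁻¹ := by rw [hθ, inv_inv]; ring
  have hsegment :
      algebraMap ℝ A μ - t = algebraMap ℝ A (-θ⁻¹) * ((1 - θ) • (1 : A) + θ • t) := by
    rw [Algebra.algebraMap_eq_smul_one, Algebra.algebraMap_eq_smul_one, smul_one_mul, hμ_eq]
    match_scalars
    · field_simp
      ring
    · field_simp
  refine spectrum.mem_iff.mp hμ ?_
  rw [hsegment]
  exact ((isUnit_iff_ne_zero.mpr (by simpa using hθ_pos.ne')).map _).mul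
    (hseg θ ⟨hθ_pos, hθ_le_one⟩)

section

variable {R : Type*} [CommRing R] {n : Type*} [Fintype n]

theorem Matrix.transpose_mul_nonsing_inv_eq_of_transpose_mul_comm [DecidableEq n]
    {A₀ A₁ : Matrix n n R} (hA₀ : IsUnit A₀.det) (hhor : A₁ᵀ * A₀ = A₀ᵀ * A₁) :
    (A₁ * A₀⁻¹)ᵀ = A₁ * A₀⁻¹ := by
  have hA₁t : A₁ᵀ = A₀ᵀ * (A₁ * A₀⁻¹) := by
    rw [← Matrix.mul_assoc, ← hhor, mul_nonsing_inv_cancel_right _ _ hA₀]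
  rw [transpose_mul, transpose_nonsing_inv, hA₁t,
    nonsing_inv_mul_cancel_left _ _ (by rwa [det_transpose])]

theorem Matrix.mul_mul_transpose_mul_of_transpose_eq {T M : Matrix n n R} (hT : Tᵀ = T) :
    T * (M * Mᵀ) * T = (T * M) * (T * M)ᵀ := by
  rw [transpose_mul, hT, Matrix.mul_assoc, Matrix.mul_assoc, Matrix.mul_assoc]

theorem Matrix.smul_add_smul_eq_mul [DecidableEq n] {A₀ A₁ : Matrix n n R}
    (hA₀ : IsUnit A₀.det) (θ : R) :
    (1 - θ) • A₀ + θ • A₁ = ((1 - θ) • (1 : Matrix n n R) + θ • (A₁ * A₀⁻¹)) * A₀ := by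
  rw [Matrix.add_mul, smul_mul, smul_mul, Matrix.one_mul, nonsing_inv_mul_cancel_right _ _ hA₀]

end

theorem horizontal_line_gives_riccati_general {n : ℕ} {A₀ A₁ : Matrix (Fin n) (Fin n) ℝ}
    (hA0 : IsUnit A₀)
    (hline : ∃ a b : ℝ, a < 0 ∧ 1 < b ∧ ∀ θ ∈ Set.Ioo a b,
      IsUnit ((1 - θ) • A₀ + θ • A₁))
    (hhor : A₁ᵀ * A₀ = A₀ᵀ * A₁) :
    (A₁ * A₀⁻¹).PosDef ∧ (A₁ * A₀⁻¹) * (A₀ * A₀ᵀ) * (A₁ * A₀⁻¹) = A₁ * A₁ᵀ := by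
  obtain ⟨a, b, ha, hb, hline⟩ := hline
  have hdet : IsUnit A₀.det := (isUnit_iff_isUnit_det _).mp hA0
  have hsymm := transpose_mul_nonsing_inv_eq_of_transpose_mul_comm hdet hhor
  have hherm : (A₁ * A₀⁻¹).IsHermitian := by
    rwa [IsHermitian, conjTranspose_eq_transpose_of_trivial]
  have hseg : ∀ θ ∈ Set.Ioc (0 : ℝ) 1, IsUnit ((1 - θ) • 1 + θ • (A₁ * A₀⁻¹)) := by
    intro θ hθ
    rw [← IsUnit.mul_right_iff hA0, ← smul_add_smul_eq_mul hdet]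
    exact hline θ ⟨ha.trans hθ.1, hθ.2.trans_lt hb⟩
  refine ⟨hherm.posDef_iff_eigenvalues_pos.mpr fun i ↦
    spectrum.pos_of_forall_isUnit_segment hseg (hherm.eigenvalues_mem_spectrum_real i), ?_⟩
  rw [mul_mul_transpose_mul_of_transpose_eq hsymm, nonsing_inv_mul_cancel_right _ _ hdet]

/-- if the line `(1−θ)A₀ + θA₁` is invertible on an open interval containing
`[0,1]` and horizontal (`A₁ᵀ A₀ = A₀ᵀ A₁`), then `T = A₁ A₀⁻¹` is symmetric positive definite
and solves `T (A₀A₀ᵀ) T = A₁A₁ᵀ`. -/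
theorem horizontal_line_gives_riccati {n : ℕ} {A₀ A₁ : Matrix (Fin n) (Fin n) ℝ}
    (hA0 : IsUnit A₀) (hA1 : IsUnit A₁)
    (hline : ∃ a b : ℝ, a < 0 ∧ 1 < b ∧ ∀ θ ∈ Set.Ioo a b,
      IsUnit ((1 - θ) • A₀ + θ • A₁))
    (hhor : A₁ᵀ * A₀ = A₀ᵀ * A₁) :
    (A₁ * A₀⁻¹).PosDef ∧ (A₁ * A₀⁻¹) * (A₀ * A₀ᵀ) * (A₁ * A₀⁻¹) = A₁ * A₁ᵀ :=
  horizontal_line_gives_riccati_general hA0 hline hhor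
end

section
/- Let C be symmetric positive definite and V symmetric with I + L_C[V] symmetric positive definite. Then Exp_C(V) := (L_C[V] + I) C (L_C[V] + I) is symmetric positive definite, and Exp_C(V) = C + V + L_C[V] C L_C[V]. -/
open Matrix

theorem Matrix.PosDef.mul_mul_same_of_isHermitian {n R : Type*} [Fintype n] [DecidableEq n]
    [CommRing R] [PartialOrder R] [StarRing R] {A S : Matrix n n R} (hA : A.PosDef)
    (hS : S.IsHermitian) (hSu : IsUnit S) : (S * A * S).PosDef := by
  simpa only [star_eq_conjTranspose, hS.eq] using hSu.posDef_star_left_conjugate_iff.2 hA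

theorem riemannian_exp_posDef_general {n : ℕ} {C V X : Matrix (Fin n) (Fin n) ℝ}
    (hC : C.PosDef) (hXeq : X * C + C * X = V)
    (hpos : ((1 : Matrix (Fin n) (Fin n) ℝ) + X).PosDef) :
    ((X + 1) * C * (X + 1)).PosDef ∧ (X + 1) * C * (X + 1) = C + V + X * C * X := by
  rw [add_comm] at hpos
  refine ⟨hC.mul_mul_same_of_isHermitian hpos.isHermitian hpos.isUnit, ?_⟩
  rw [← hXeq]
  noncomm_ring

/-- if `X = L_C[V]` and `I + X` is positive definite, then
`Exp_C(V) = (X + I) C (X + I)` is positive definite and equals `C + V + X C X`. -/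
theorem riemannian_exp_posDef {n : ℕ} {C V X : Matrix (Fin n) (Fin n) ℝ}
    (hC : C.PosDef) (hV : V.IsSymm) (hX : X.IsSymm) (hXeq : X * C + C * X = V)
    (hpos : ((1 : Matrix (Fin n) (Fin n) ℝ) + X).PosDef) :
    ((X + 1) * C * (X + 1)).PosDef ∧ (X + 1) * C * (X + 1) = C + V + X * C * X :=
  riemannian_exp_posDef_general hC hXeq hpos
end
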